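/- No formula in the language {¬,∧,∨,□} defines 𝐈p on the class of S5 frames: consider the single-reflexive-point model M with p exactly true at w₀, and the model M' with two mutually accessible reflexive points w₀', w₁' both having p exactly true. Then for every □-formula φ, if φ is true (resp. false) at w₀ in M, then φ is true (resp. false) at both w₀' and w₁' in M'; yet 𝐈p is true at w₀ in M and not true at w₀' in M'. -/

import Mathlib

/-- Formulas of the language with ¬, ∧, ∨, □, ■, 𝐈 and ▲. -/
inductive Form : Type
  | var : ℕ → Form
  | neg : Form → Form
  | conj : Form → Form → Form
  | disj : Form → Form → Form
  | box : Form → Form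
  | bbox : Form → Form
  | ign : Form → Form
  | tri : Form → Form

/-- A Kripke model for Belnap–Dunn modal logic. -/
structure Model (W : Type) where
  R : W → W → Prop
  vp : ℕ → W → Prop
  vn : ℕ → W → Prop

mutual
  /-- support of truth -/
  def tr {W : Type} (M : Model W) : Form → W → Prop
    | .var n, w => M.vp n w
    | .neg φ, w => fa M φ w
    | .conj φ ψ, w => tr M φ w ∧ tr M ψ w
    | .disj φ ψ, w => tr M φ w ∨ tr M ψ w
    | .box φ, w => ∀ w', M.R w w' → tr M φ w'
    | .bbox φ, w => (∀ w', M.R w w' → tr M φ w') ∧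
        ∀ w₁ w₂, M.R w w₁ → M.R w w₂ → fa M φ w₁ → fa M φ w₂
    | .ign φ, w => tr M φ w ∧ (∀ w', M.R w w' → w' ≠ w → fa M φ w') ∧
        ∀ w₁ w₂, M.R w w₁ → w₁ ≠ w → M.R w w₂ → w₂ ≠ w → tr M φ w₁ → tr M φ w₂
    | .tri φ, w => (∀ w₁ w₂, M.R w w₁ → M.R w w₂ →
          (tr M φ w₁ → tr M φ w₂) ∧ (fa M φ w₁ → fa M φ w₂)) ∧
        ∀ w', M.R w w' → tr M φ w' ∨ fa M φ w'
  /-- support of falsity -/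
  def fa {W : Type} (M : Model W) : Form → W → Prop
    | .var n, w => M.vn n w
    | .neg φ, w => tr M φ w
    | .conj φ ψ, w => fa M φ w ∨ fa M ψ w
    | .disj φ ψ, w => fa M φ w ∧ fa M ψ w
    | .box φ, w => ∃ w', M.R w w' ∧ fa M φ w'
    | .bbox φ, w => (∃ w', M.R w w' ∧ fa M φ w') ∨
        ∃ w₁ w₂, M.R w w₁ ∧ M.R w w₂ ∧ tr M φ w₁ ∧ ¬ tr M φ w₂
    | .ign φ, w => fa M φ w ∨ (∃ w', M.R w w' ∧ w' ≠ w ∧ tr M φ w') ∨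
        ∃ w₁ w₂, (M.R w w₁ ∧ w₁ ≠ w) ∧ (M.R w w₂ ∧ w₂ ≠ w) ∧ ¬ fa M φ w₁ ∧ fa M φ w₂
    | .tri φ, w => (∃ w₁ w₂, M.R w w₁ ∧ M.R w w₂ ∧ tr M φ w₁ ∧ ¬ tr M φ w₂) ∨
        (∃ w₁ w₂, M.R w w₁ ∧ M.R w w₂ ∧ fa M φ w₁ ∧ ¬ fa M φ w₂) ∨
        (∃ w₁ w₂, M.R w w₁ ∧ M.R w w₂ ∧ tr M φ w₁ ∧ fa M φ w₂)
end

/-- φ contains an occurrence of □ -/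
def hasBox : Form → Prop
  | .var _ => False
  | .neg φ => hasBox φ
  | .conj φ ψ => hasBox φ ∨ hasBox ψ
  | .disj φ ψ => hasBox φ ∨ hasBox ψ
  | .box _ => True
  | .bbox φ => hasBox φ
  | .ign φ => hasBox φ
  | .tri φ => hasBox φ

/-- φ contains an occurrence of ■ -/
def hasBBox : Form → Prop
  | .var _ => False
  | .neg φ => hasBBox φ
  | .conj φ ψ => hasBBox φ ∨ hasBBox ψ
  | .disj φ ψ => hasBBox φ ∨ hasBBox ψ
  | .box φ => hasBBox φ
  | .bbox _ => True
  | .ign φ => hasBBox φ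
  | .tri φ => hasBBox φ

/-- φ contains an occurrence of 𝐈 -/
def hasIgn : Form → Prop
  | .var _ => False
  | .neg φ => hasIgn φ
  | .conj φ ψ => hasIgn φ ∨ hasIgn ψ
  | .disj φ ψ => hasIgn φ ∨ hasIgn ψ
  | .box φ => hasIgn φ
  | .bbox φ => hasIgn φ
  | .ign _ => True
  | .tri φ => hasIgn φ

/-- φ contains an occurrence of ▲ -/
def hasTri : Form → Prop
  | .var _ => False
  | .neg φ => hasTri φ
  | .conj φ ψ => hasTri φ ∨ hasTri ψ
  | .disj φ ψ => hasTri φ ∨ hasTri ψ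
  | .box φ => hasTri φ
  | .bbox φ => hasTri φ
  | .ign φ => hasTri φ
  | .tri _ => True

/-- validity of the sequent φ ⊢ χ on the frame (W,R) -/
def validOn {W : Type} (R : W → W → Prop) (φ χ : Form) : Prop :=
  ∀ (vp vn : ℕ → W → Prop) (w : W), tr ⟨R, vp, vn⟩ φ w → tr ⟨R, vp, vn⟩ χ w

/-- ♦φ := ¬■¬φ -/
def dia (φ : Form) : Form := .neg (.bbox (.neg φ))

/-! The constant map from `M'` onto `M` is a bounded morphism, and truth and falsity of
{¬,∧,∨,□}-formulas are invariant under bounded morphisms. `𝐈` is not: it looks at `R(w) \ {w}`,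
which is empty in `M` but not in `M'`, and the map collapses the difference. -/

structure IsBoundedMorphism {W W' : Type} (M' : Model W') (M : Model W) (f : W' → W) : Prop where
  vp_iff : ∀ n w, M'.vp n w ↔ M.vp n (f w)
  vn_iff : ∀ n w, M'.vn n w ↔ M.vn n (f w)
  forth : ∀ w v, M'.R w v → M.R (f w) (f v)
  back : ∀ w u, M.R (f w) u → ∃ v, M'.R w v ∧ f v = u

namespace IsBoundedMorphism

variable {W W' : Type} {M' : Model W'} {M : Model W} {f : W' → W}

theorem tr_iff_and_fa_iff (hf : IsBoundedMorphism M' M f) :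
    ∀ φ : Form, ¬ hasBBox φ → ¬ hasIgn φ → ¬ hasTri φ →
      ∀ w, (tr M' φ w ↔ tr M φ (f w)) ∧ (fa M' φ w ↔ fa M φ (f w))
  | .var n, _, _, _, w => ⟨hf.vp_iff n w, hf.vn_iff n w⟩
  | .neg φ, hB, hI, hT, w => by
    obtain ⟨htr, hfa⟩ := tr_iff_and_fa_iff hf φ hB hI hT w
    simp only [tr, fa]
    exact ⟨hfa, htr⟩
  | .conj φ ψ, hB, hI, hT, w => by
    simp only [hasBBox, hasIgn, hasTri, not_or] at hB hI hT
    obtain ⟨htrφ, hfaφ⟩ := tr_iff_and_fa_iff hf φ hB.1 hI.1 hT.1 w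
    obtain ⟨htrψ, hfaψ⟩ := tr_iff_and_fa_iff hf ψ hB.2 hI.2 hT.2 w
    simp only [tr, fa, htrφ, hfaφ, htrψ, hfaψ, and_self]
  | .disj φ ψ, hB, hI, hT, w => by
    simp only [hasBBox, hasIgn, hasTri, not_or] at hB hI hT
    obtain ⟨htrφ, hfaφ⟩ := tr_iff_and_fa_iff hf φ hB.1 hI.1 hT.1 w
    obtain ⟨htrψ, hfaψ⟩ := tr_iff_and_fa_iff hf ψ hB.2 hI.2 hT.2 w
    simp only [tr, fa, htrφ, hfaφ, htrψ, hfaψ, and_self]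
  | .box φ, hB, hI, hT, w => by
    have ih := fun v => tr_iff_and_fa_iff hf φ hB hI hT v
    simp only [tr, fa]
    constructor
    · constructor
      · intro h u hu
        obtain ⟨v, hv, rfl⟩ := hf.back w u hu
        exact (ih v).1.1 (h v hv)
      · intro h v hv
        exact (ih v).1.2 (h (f v) (hf.forth w v hv))
    · constructor
      · rintro ⟨v, hv, hfa⟩
        exact ⟨f v, hf.forth w v hv, (ih v).2.1 hfa⟩
      · rintro ⟨u, hu, hfa⟩
        obtain ⟨v, hv, rfl⟩ := hf.back w u hu
        exact ⟨v, hv, (ih v).2.2 hfa⟩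
  | .bbox _, hB, _, _, _ => absurd trivial hB
  | .ign _, _, hI, _, _ => absurd trivial hI
  | .tri _, _, _, hT, _ => absurd trivial hT

end IsBoundedMorphism

/-- no {¬,∧,∨,□}-formula defines 𝐈p on S5 frames. -/
theorem box_cannot_define_ign :
    let M : Model Unit := ⟨fun _ _ => True, fun _ _ => True, fun _ _ => False⟩
    let M' : Model Bool := ⟨fun _ _ => True, fun _ _ => True, fun _ _ => False⟩
    (∀ φ : Form, ¬ hasBBox φ → ¬ hasIgn φ → ¬ hasTri φ →
      (tr M φ () → ∀ b, tr M' φ b) ∧ (fa M φ () → ∀ b, fa M' φ b)) ∧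
    tr M (.ign (.var 0)) () ∧ ¬ tr M' (.ign (.var 0)) false := by
  intro M M'
  have hf : IsBoundedMorphism M' M (fun _ => ()) :=
    ⟨fun _ _ => Iff.rfl, fun _ _ => Iff.rfl, fun _ _ _ => trivial,
      fun w _ _ => ⟨w, trivial, rfl⟩⟩
  refine ⟨fun φ hB hI hT => ?_, ?_, ?_⟩
  · have h := hf.tr_iff_and_fa_iff φ hB hI hT
    exact ⟨fun htr b => (h b).1.2 htr, fun hfa b => (h b).2.2 hfa⟩
  · exact ⟨trivial, fun _ _ hne => (hne rfl).elim, fun _ _ _ hne => (hne rfl).elim⟩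
  · rintro ⟨-, hfalse, -⟩
    exact hfalse true trivial (by decide)
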